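/- There exists a constant η₀ > 0, depending only on n, p, q, s, such that for every admissible function u on ℝ^n with ‖∇u‖_p > 0 and ‖u‖_s > 0 there exists λ > 0 with F(τ_λ u) = η₀ · G(u)^k, where k = q(np + ps − ns)/(np + pq − ns); moreover 0 < k < q. -/

import Mathlib

open MeasureTheory Real Set

noncomputable section

abbrev Euc (n : ℕ) := EuclideanSpace ℝ (Fin n)

/-- The `L^r` norm of `u : ℝⁿ → ℝ` with respect to Lebesgue measure. -/
def lpNorm (n : ℕ) (r : ℝ) (u : Euc n → ℝ) : ℝ :=
  (∫ x : Euc n, |u x| ^ r) ^ (1 / r)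

/-- The `L^p` norm of the gradient of `u`. -/
def gradLpNorm (n : ℕ) (p : ℝ) (u : Euc n → ℝ) : ℝ :=
  (∫ x : Euc n, ‖fderiv ℝ u x‖ ^ p) ^ (1 / p)

/-- `u ∈ D^{p,s}(ℝⁿ)`: continuously differentiable with finite `L^s`, `L^q` and gradient `L^p`
norms. -/
structure Admissible (n : ℕ) (p s q : ℝ) (u : Euc n → ℝ) : Prop where
  smooth : ContDiff ℝ 1 u
  int_s : Integrable (fun x : Euc n => |u x| ^ s)
  int_q : Integrable (fun x : Euc n => |u x| ^ q)
  int_grad : Integrable (fun x : Euc n => ‖fderiv ℝ u x‖ ^ p)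

/-- The standing assumptions on the parameters `n, p, s, q, θ`. -/
structure Params (n : ℕ) (p s q θ : ℝ) : Prop where
  hn : 2 ≤ n
  hp : 1 < p
  hpn : p < n
  hs : 1 ≤ s
  hsq : s < q
  hq : q < n * p / (n - p)
  hθ0 : 0 < θ
  hθ1 : θ < 1
  hθ : θ / (n * p / (n - p)) + (1 - θ) / s = 1 / q

/-- The GNS quotient `‖∇u‖_p^θ ‖u‖_s^{1-θ} / ‖u‖_q`. -/
def GNSRatio (n : ℕ) (p s q θ : ℝ) (u : Euc n → ℝ) : ℝ :=
  gradLpNorm n p u ^ θ * lpNorm n s u ^ (1 - θ) / lpNorm n q u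

/-- The optimal Gagliardo–Nirenberg–Sobolev constant. -/
def GNSconst (n : ℕ) (p s q θ : ℝ) : ℝ :=
  sInf {c | ∃ u : Euc n → ℝ, Admissible n p s q u ∧ u ≠ 0 ∧ c = GNSRatio n p s q θ u}

/-- The GNS deficit `δ(u)`. -/
def deficit (n : ℕ) (p s q θ : ℝ) (u : Euc n → ℝ) : ℝ :=
  gradLpNorm n p u ^ θ * lpNorm n s u ^ (1 - θ) / (GNSconst n p s q θ * lpNorm n q u) - 1

/-- `v` is an optimizer for the GNS inequality. -/
def IsOptimizer (n : ℕ) (p s q θ : ℝ) (v : Euc n → ℝ) : Prop :=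
  Admissible n p s q v ∧ v ≠ 0 ∧
    gradLpNorm n p v ^ θ * lpNorm n s v ^ (1 - θ) = GNSconst n p s q θ * lpNorm n q v

/-- `v` is radially symmetric with non-increasing profile about the point `x₀`. -/
def IsCenter (n : ℕ) (v : Euc n → ℝ) (x₀ : Euc n) : Prop :=
  ∃ f : ℝ → ℝ, AntitoneOn f (Ici 0) ∧ ∀ x, v x = f ‖x - x₀‖

/-- The asymmetry `λ(u)`. -/
def asym (n : ℕ) (p s q θ : ℝ) (u : Euc n → ℝ) : ℝ :=
  sInf {r | ∃ v : Euc n → ℝ, IsOptimizer n p s q θ v ∧ lpNorm n q v = lpNorm n q u ∧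
    r = lpNorm n q (u - v) ^ q / lpNorm n q u ^ q}

/-- The relative asymmetry `λ(u|S)`: only optimizers whose center lies in `S` compete. -/
def relAsym (n : ℕ) (p s q θ : ℝ) (u : Euc n → ℝ) (S : Set (Euc n)) : ℝ :=
  sInf {r | ∃ (v : Euc n → ℝ) (x₀ : Euc n), IsOptimizer n p s q θ v ∧ IsCenter n v x₀ ∧
    x₀ ∈ S ∧ lpNorm n q v = lpNorm n q u ∧
    r = lpNorm n q (u - v) ^ q / lpNorm n q u ^ q}

/-- `u` is radial non-increasing: `u(x) = f(|x|)` for a non-increasing `f : [0,∞) → [0,∞)`. -/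
def RadialNonincreasing (n : ℕ) (u : Euc n → ℝ) : Prop :=
  ∃ f : ℝ → ℝ, AntitoneOn f (Ici 0) ∧ (∀ r ∈ Ici (0 : ℝ), 0 ≤ f r) ∧ ∀ x, u x = f ‖x‖

/-- Orthogonal reflection across the hyperplane `{x | ⟪v,x⟫ = c}` (for `‖v‖ = 1`). -/
def reflAcross (n : ℕ) (v : Euc n) (c : ℝ) (x : Euc n) : Euc n :=
  x - (2 * ((inner ℝ v x : ℝ) - c)) • v

/-- `u` is invariant under the reflections across `k` mutually orthogonal hyperplanes with
unit normals `v i` and offsets `c i`. -/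
def SymmetricAcrossOrtho (n k : ℕ) (u : Euc n → ℝ) (v : Fin k → Euc n) (c : Fin k → ℝ) : Prop :=
  (∀ i, ‖v i‖ = 1) ∧ (Pairwise fun i j => (inner ℝ (v i) (v j) : ℝ) = 0) ∧
    ∀ (i : Fin k) (x : Euc n), u (reflAcross n (v i) (c i) x) = u x

/-- `u` is `k`-symmetric. -/
def NSym (n k : ℕ) (u : Euc n → ℝ) : Prop :=
  ∃ (v : Fin k → Euc n) (c : Fin k → ℝ), SymmetricAcrossOrtho n k u v c

/-- The rescaling `τ_λ u (x) = λ^{n/q} u (λ x)`, which preserves the `L^q` norm. -/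
def rescale (n : ℕ) (q lam : ℝ) (u : Euc n → ℝ) : Euc n → ℝ :=
  fun x => lam ^ ((n : ℝ) / q) * u (lam • x)

/-- The functional `F(u) = ∫ |∇u|^p + ∫ |u|^s`. -/
def Ffun (n : ℕ) (p s : ℝ) (u : Euc n → ℝ) : ℝ :=
  (∫ x : Euc n, ‖fderiv ℝ u x‖ ^ p) + ∫ x : Euc n, |u x| ^ s

/-- The functional `G(u) = ‖∇u‖_p^θ ‖u‖_s^{1-θ}`. -/
def Gfun (n : ℕ) (p s θ : ℝ) (u : Euc n → ℝ) : ℝ :=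
  gradLpNorm n p u ^ θ * lpNorm n s u ^ (1 - θ)

/-- `φ(m) = inf {F(u) : ‖u‖_q^q = m}`. -/
def phi (n : ℕ) (p s q : ℝ) (m : ℝ) : ℝ :=
  sInf {c | ∃ u : Euc n → ℝ, Admissible n p s q u ∧ lpNorm n q u ^ q = m ∧ c = Ffun n p s u}

/-- Volume of the unit ball in `ℝⁿ`. -/
def unitBallVol (n : ℕ) : ℝ := (volume (Metric.ball (0 : Euc n) 1)).toReal

/-- The spherically symmetric decreasing rearrangement `u^⋆`. -/
def rearr (n : ℕ) (u : Euc n → ℝ) : Euc n → ℝ :=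
  fun x => sInf {t : ℝ | 0 < t ∧
    volume {y : Euc n | t < |u y|} ≤ ENNReal.ofReal (unitBallVol n * ‖x‖ ^ (n : ℝ))}

/-- The Pólya–Szegő deficit. -/
def deltaPS (n : ℕ) (p : ℝ) (u : Euc n → ℝ) : ℝ :=
  (gradLpNorm n p u - gradLpNorm n p (rearr n u)) / gradLpNorm n p (rearr n u)

/-- `u` is symmetric with respect to each coordinate hyperplane `{x_i = 0}`. -/
def CoordSym (n : ℕ) (u : Euc n → ℝ) : Prop :=
  ∀ (i : Fin n) (x : Euc n), u (WithLp.toLp 2 (Function.update (WithLp.ofLp x) i (-(x i)))) = u x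

/-! Under `τ_λ`, `∫ |∇u|^p` scales like `λ^a` and `∫ |u|^s` like `λ^(-b)`, with
`a = (n/q + 1) p - n > 0` (this is `q < p*`) and `b = n (1 - s/q) > 0`. At the critical point of
`λ ↦ λ^a A + λ^(-b) B` its value is `c(a,b) A^(b/(a+b)) B^(a/(a+b))`, and the relation defining `θ`
turns this product of powers into exactly `G(u)^k`; so `η₀ = c(a,b)` works. -/

lemma pos_of_rpow_pos {x r : ℝ} (hx : 0 ≤ x) (hr : r ≠ 0) (h : 0 < x ^ r) : 0 < x := by
  refine hx.lt_of_ne' fun hx0 => ?_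
  rw [hx0, zero_rpow hr] at h
  exact h.false

lemma rpow_mul_add_rpow_neg_mul_eq {a b A B : ℝ} (ha : 0 < a) (hb : 0 < b) (hA : 0 < A)
    (hB : 0 < B) :
    ((b * B / (a * A)) ^ (1 / (a + b))) ^ a * A + ((b * B / (a * A)) ^ (1 / (a + b))) ^ (-b) * B
      = ((b / a) ^ (a / (a + b)) + (a / b) ^ (b / (a + b)))
          * (A ^ (b / (a + b)) * B ^ (a / (a + b))) := by
  have hab : 0 < a + b := by linarith
  set t := a / (a + b)
  have hbt : b / (a + b) = 1 - t := by
    rw [eq_sub_iff_add_eq, ← add_div, div_eq_one_iff_eq hab.ne', add_comm]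
  have hba : 0 < b / a := by positivity
  have hBA : 0 < B / A := by positivity
  rw [← rpow_mul (by positivity), ← rpow_mul (by positivity), one_div_mul_eq_div,
    div_mul_eq_mul_div, one_mul, neg_div, hbt,
    show b * B / (a * A) = b / a * (B / A) by field_simp,
    mul_rpow hba.le hBA.le, mul_rpow hba.le hBA.le,
    rpow_neg hba.le, ← inv_rpow hba.le, inv_div, rpow_neg hBA.le,
    div_rpow hB.le hA.le, div_rpow hB.le hA.le, rpow_sub hA, rpow_sub hB, rpow_one, rpow_one]
  have : A ^ t ≠ 0 := by positivity
  have : B ^ t ≠ 0 := by positivity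
  field_simp
  ring

lemma fderiv_rescale (n : ℕ) (q lam : ℝ) (u : Euc n → ℝ) (x : Euc n) :
    fderiv ℝ (rescale n q lam u) x = (lam ^ ((n : ℝ) / q) * lam) • fderiv ℝ u (lam • x) := by
  change fderiv ℝ (lam ^ ((n : ℝ) / q) • fun x => u (lam • x)) x = _
  rw [fderiv_const_smul_field, Pi.smul_apply, fderiv_comp_smul, smul_smul]

lemma integral_norm_fderiv_rescale_rpow (n : ℕ) (p q : ℝ) (u : Euc n → ℝ) {lam : ℝ}
    (hlam : 0 < lam) :
    ∫ x, ‖fderiv ℝ (rescale n q lam u) x‖ ^ p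
      = lam ^ (((n : ℝ) / q + 1) * p - n) * ∫ x, ‖fderiv ℝ u x‖ ^ p := by
  have hc : 0 ≤ lam ^ ((n : ℝ) / q) * lam := by positivity
  simp_rw [fderiv_rescale, norm_smul, norm_of_nonneg hc, mul_rpow hc (norm_nonneg _)]
  rw [integral_const_mul,
    Measure.integral_comp_smul_of_nonneg volume (fun y => ‖fderiv ℝ u y‖ ^ p) lam (hR := hlam.le),
    smul_eq_mul, finrank_euclideanSpace_fin, ← mul_assoc, ← rpow_natCast, ← rpow_neg hlam.le,
    ← rpow_add_one hlam.ne', ← rpow_mul hlam.le, ← rpow_add hlam, ← sub_eq_add_neg]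

lemma integral_rpow_abs_rescale (n : ℕ) (s q : ℝ) (u : Euc n → ℝ) {lam : ℝ} (hlam : 0 < lam) :
    ∫ x, |rescale n q lam u x| ^ s = lam ^ ((n : ℝ) * s / q - n) * ∫ x, |u x| ^ s := by
  simp_rw [rescale, abs_mul, abs_of_pos (by positivity : 0 < lam ^ ((n : ℝ) / q)),
    mul_rpow (by positivity : 0 ≤ lam ^ ((n : ℝ) / q)) (abs_nonneg _)]
  rw [integral_const_mul,
    Measure.integral_comp_smul_of_nonneg volume (fun y => |u y| ^ s) lam (hR := hlam.le),
    smul_eq_mul, finrank_euclideanSpace_fin, ← mul_assoc, ← rpow_natCast, ← rpow_neg hlam.le,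
    ← rpow_mul hlam.le, ← rpow_add hlam]
  ring_nf

namespace Params

variable {n : ℕ} {p s q θ : ℝ}

lemma q_mul_sub_lt (h : Params n p s q θ) : q * (n - p) < n * p :=
  (lt_div_iff₀ (sub_pos.2 h.hpn)).1 h.hq

lemma exponent_numerator_pos (h : Params n p s q θ) : 0 < n * p + p * s - n * s := by
  have := h.q_mul_sub_lt
  nlinarith [h.hsq, h.hpn]

lemma exponent_denominator_pos (h : Params n p s q θ) : 0 < n * p + p * q - n * s := by
  have := h.q_mul_sub_lt
  nlinarith [h.hsq, h.hpn, h.hp]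

lemma grad_scaling_exponent_pos (h : Params n p s q θ) : 0 < ((n : ℝ) / q + 1) * p - n := by
  have hq : 0 < q := by linarith [h.hs, h.hsq]
  have : ((n : ℝ) / q + 1) * p - n = (n * p - q * (n - p)) / q := by field_simp; ring
  rw [this]
  exact div_pos (by linarith [h.q_mul_sub_lt]) hq

lemma lp_scaling_exponent_pos (h : Params n p s q θ) : 0 < (n : ℝ) - n * s / q := by
  have hq : 0 < q := by linarith [h.hs, h.hsq]
  have : (n : ℝ) - n * s / q = n * (q - s) / q := by field_simp
  rw [this]
  have : (0 : ℝ) < n := by linarith [h.hp, h.hpn]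
  exact div_pos (mul_pos this (by linarith [h.hsq])) hq

lemma theta_mul (h : Params n p s q θ) : θ * (q * (n * p + p * s - n * s)) = n * p * (q - s) := by
  have hs : 0 < s := by linarith [h.hs]
  have hq : 0 < q := by linarith [h.hsq]
  have hnp : (0 : ℝ) < n - p := sub_pos.2 h.hpn
  have hnp' : (0 : ℝ) < n * p := by nlinarith [h.hp]
  have hcancel : θ * (n - p) * s / (n * p) * (n * p) = θ * (n - p) * s :=
    div_mul_cancel₀ _ hnp'.ne'
  have := h.hθ
  field_simp at this
  linear_combination (-(n * p : ℝ)) * this + q * hcancel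

lemma scaling_exponent_sum (h : Params n p s q θ) :
    ((n : ℝ) / q + 1) * p - n + (n - n * s / q) = (n * p + p * q - n * s) / q := by
  have hq : q ≠ 0 := by linarith [h.hs, h.hsq]
  field_simp
  ring

lemma theta_div_mul_exponent (h : Params n p s q θ) :
    θ / p * (q * (n * p + p * s - n * s) / (n * p + p * q - n * s))
      = (n - n * s / q) / ((n / q + 1) * p - n + (n - n * s / q)) := by
  have hp : 0 < p := by linarith [h.hp]
  have hq : q ≠ 0 := by linarith [h.hs, h.hsq]
  have hD := h.exponent_denominator_pos
  rw [h.scaling_exponent_sum]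
  generalize (n : ℝ) * p + p * q - n * s = D at hD ⊢
  field_simp
  linear_combination h.theta_mul

lemma one_sub_theta_div_mul_exponent (h : Params n p s q θ) :
    (1 - θ) / s * (q * (n * p + p * s - n * s) / (n * p + p * q - n * s))
      = ((n / q + 1) * p - n) / ((n / q + 1) * p - n + (n - n * s / q)) := by
  have hs : 0 < s := by linarith [h.hs]
  have hq : q ≠ 0 := by linarith [h.hs, h.hsq]
  have hD := h.exponent_denominator_pos
  rw [h.scaling_exponent_sum]
  generalize (n : ℝ) * p + p * q - n * s = D at hD ⊢
  field_simp
  linear_combination -h.theta_mul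

lemma exponent_pos (h : Params n p s q θ) :
    0 < q * (n * p + p * s - n * s) / (n * p + p * q - n * s) :=
  div_pos (mul_pos (by linarith [h.hs, h.hsq]) h.exponent_numerator_pos) h.exponent_denominator_pos

lemma exponent_lt (h : Params n p s q θ) :
    q * (n * p + p * s - n * s) / (n * p + p * q - n * s) < q := by
  have hq : 0 < q := by linarith [h.hs, h.hsq]
  rw [div_lt_iff₀ h.exponent_denominator_pos, mul_lt_mul_iff_right₀ hq]
  nlinarith [h.hsq, h.hp]

end Params

lemma Ffun_rescale (n : ℕ) (p s q : ℝ) (u : Euc n → ℝ) {lam : ℝ} (hlam : 0 < lam) :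
    Ffun n p s (rescale n q lam u)
      = lam ^ (((n : ℝ) / q + 1) * p - n) * (∫ x, ‖fderiv ℝ u x‖ ^ p)
        + lam ^ (-(n - n * s / q)) * ∫ x, |u x| ^ s := by
  rw [Ffun, integral_norm_fderiv_rescale_rpow n p q u hlam,
    integral_rpow_abs_rescale n s q u hlam, neg_sub, mul_div_assoc]

lemma Gfun_rpow (n : ℕ) (p s θ k : ℝ) (u : Euc n → ℝ) :
    Gfun n p s θ u ^ k
      = (∫ x, ‖fderiv ℝ u x‖ ^ p) ^ (θ / p * k) * (∫ x, |u x| ^ s) ^ ((1 - θ) / s * k) := by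
  have hA : 0 ≤ ∫ x, ‖fderiv ℝ u x‖ ^ p := integral_nonneg fun _ => by positivity
  have hB : 0 ≤ ∫ x, |u x| ^ s := integral_nonneg fun _ => by positivity
  rw [Gfun, gradLpNorm, _root_.lpNorm, ← rpow_mul hA, ← rpow_mul hB,
    mul_rpow (by positivity) (by positivity), ← rpow_mul hA, ← rpow_mul hB,
    one_div_mul_eq_div, one_div_mul_eq_div]

/-- there is a constant `η₀ > 0` such that every admissible `u` with nonzero
gradient and `L^s` norm admits a rescaling with `F(τ_λ u) = η₀ G(u)^k`, where
`k = q(np+ps-ns)/(np+pq-ns) ∈ (0, q)`. -/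
theorem stmt_2 (n : ℕ) (p s q θ : ℝ) (hP : Params n p s q θ) :
    ∃ η₀ > (0 : ℝ),
      (∀ u : Euc n → ℝ, Admissible n p s q u →
        0 < gradLpNorm n p u → 0 < lpNorm n s u →
        ∃ lam > (0 : ℝ), Ffun n p s (rescale n q lam u) =
          η₀ * Gfun n p s θ u ^ (q * (n * p + p * s - n * s) / (n * p + p * q - n * s))) ∧
      0 < q * (n * p + p * s - n * s) / (n * p + p * q - n * s) ∧
      q * (n * p + p * s - n * s) / (n * p + p * q - n * s) < q := by
  set a : ℝ := ((n : ℝ) / q + 1) * p - n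
  set b : ℝ := n - n * s / q
  have ha : 0 < a := hP.grad_scaling_exponent_pos
  have hb : 0 < b := hP.lp_scaling_exponent_pos
  refine ⟨(b / a) ^ (a / (a + b)) + (a / b) ^ (b / (a + b)), by positivity,
    fun u _ hgrad hlp => ?_, hP.exponent_pos, hP.exponent_lt⟩
  have hA : 0 < ∫ x, ‖fderiv ℝ u x‖ ^ p :=
    pos_of_rpow_pos (integral_nonneg fun _ => by positivity)
      (one_div_ne_zero (by linarith [hP.hp])) hgrad
  have hB : 0 < ∫ x, |u x| ^ s :=
    pos_of_rpow_pos (integral_nonneg fun _ => by positivity)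
      (one_div_ne_zero (by linarith [hP.hs])) hlp
  have hR : 0 < b * (∫ x, |u x| ^ s) / (a * ∫ x, ‖fderiv ℝ u x‖ ^ p) := by positivity
  refine ⟨_, rpow_pos_of_pos hR (1 / (a + b)), ?_⟩
  rw [Ffun_rescale n p s q u (rpow_pos_of_pos hR _), Gfun_rpow,
    hP.theta_div_mul_exponent, hP.one_sub_theta_div_mul_exponent]
  exact rpow_mul_add_rpow_neg_mul_eq ha hb hA hB

end
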